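/- Let A be a unital C*-algebra with a state φ. Let u₁, u₂ ∈ A be Haar unitaries and w₁, w₂ ∈ A positive elements each having the quarter-circular distribution with respect to φ, and assume that the four unital *-subalgebras generated respectively by u₁, u₂, w₁ and w₂ are free with respect to φ. In M₂(A) set θ = u₁⊗e(1,2) + u₂⊗e(2,1) and χ = w₁⊗e(2,2) + w₂⊗e(1,1). Then: (1) θ is unitary: θ*θ = θθ* = 1 in M₂(A); (2) θ is a Haar unitary with respect to Φ₂, i.e. Φ₂(θ^k) = Φ₂((θ*)^k) = 0 for all k ≥ 1; (3) χ is positive and has the quarter-circular distribution with respect to Φ₂; (4) the unital *-subalgebras of M₂(A) generated by θ and by χ are free with respect to Φ₂. -/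

import Mathlib

open scoped ComplexOrder

noncomputable section

/-- The `k`-th moment of the quarter-circular distribution:
`(1/π)·∫₀² t^k √(4−t²) dt`. -/
def qcMoment (k : ℕ) : ℝ :=
  (1 / Real.pi) * ∫ t in (0:ℝ)..2, t ^ k * Real.sqrt (4 - t ^ 2)

/-- A family of subsets (e.g. unital *-subalgebras) of an algebra is free with respect to a
linear functional `ψ` if `ψ(c₁⋯c_n) = 0` whenever `c_j` lies in the subalgebra of index
`i_j`, consecutive indices are distinct, and all `ψ(c_j) = 0`. -/
def AreFree {R : Type*} [Monoid R] (ψ : R → ℂ) {ι : Type*} (B : ι → Set R) : Prop :=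
  ∀ (n : ℕ), 1 ≤ n → ∀ (c : Fin n → R) (idx : Fin n → ι),
    (∀ j, c j ∈ B (idx j)) →
    (∀ (j : Fin n) (h : j.val + 1 < n), idx j ≠ idx ⟨j.val + 1, h⟩) →
    (∀ j, ψ (c j) = 0) →
    ψ ((List.ofFn c).prod) = 0

/-!
`θ` and `θ*` are antidiagonal and `χ` is diagonal. Hence every entry of `θᵏ` or `θ*ᵏ` (`k ≥ 1`) is
an alternating word in the centred letters `u₁, u₂` (resp. `u₂*, u₁*`), and by unitarity these
powers span the centred part of the algebra of `θ`; a centred element of the algebra of `χ` is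
diagonal with centred entries from the algebras of `w₂` and `w₁`. So in an alternating product of
centred elements of the algebras of `θ` and `χ`, every entry is a linear combination of alternating
products of centred elements of the four free algebras, all of which `φ` annihilates.
-/

open Submodule

section AlternatingProducts

variable {R : Type*} [Monoid R] (ψ : R → ℂ) {ι : Type*} (B : ι → Set R)

inductive IsAltCenteredProd : ι → ι → R → Prop
  | single {i : ι} {a : R} : a ∈ B i → ψ a = 0 → IsAltCenteredProd i i a
  | cons {i j k : ι} {a w : R} : a ∈ B i → ψ a = 0 → i ≠ j → IsAltCenteredProd j k w →
      IsAltCenteredProd i k (a * w)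

variable {ψ B}

theorem IsAltCenteredProd.mul {i j k l : ι} {a b : R} (ha : IsAltCenteredProd ψ B i j a)
    (hb : IsAltCenteredProd ψ B k l b) (hjk : j ≠ k) : IsAltCenteredProd ψ B i l (a * b) := by
  induction ha with
  | single ha h0 => exact .cons ha h0 hjk hb
  | cons ha h0 hij _ ih => rw [mul_assoc]; exact .cons ha h0 hij (ih hjk)

theorem IsAltCenteredProd.exists_ofFn {i j : ι} {a : R} (h : IsAltCenteredProd ψ B i j a) :
    ∃ (n : ℕ) (c : Fin (n + 1) → R) (idx : Fin (n + 1) → ι), idx 0 = i ∧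
      (∀ m, c m ∈ B (idx m)) ∧
      (∀ (m : Fin (n + 1)) (h : m.val + 1 < n + 1), idx m ≠ idx ⟨m.val + 1, h⟩) ∧
      (∀ m, ψ (c m) = 0) ∧ a = (List.ofFn c).prod := by
  induction h with
  | @single i a ha h0 =>
    exact ⟨0, fun _ => a, fun _ => i, rfl, fun _ => ha, nofun, fun _ => h0, by simp⟩
  | @cons i j k a w ha h0 hij _ ih =>
    obtain ⟨n, c, idx, rfl, hc, halt, hcen, rfl⟩ := ih
    refine ⟨n + 1, Fin.cons a c, Fin.cons i idx, rfl, Fin.cases ha hc, ?_,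
      Fin.cases h0 hcen, by simp [List.ofFn_succ]⟩
    intro m hm
    cases m using Fin.cases with
    | zero => exact hij
    | succ m => exact halt m (by simpa using hm)

theorem isAltCenteredProd_ofFn {n : ℕ} (c : Fin (n + 1) → R) (idx : Fin (n + 1) → ι)
    (hc : ∀ m, c m ∈ B (idx m))
    (halt : ∀ (m : Fin (n + 1)) (h : m.val + 1 < n + 1), idx m ≠ idx ⟨m.val + 1, h⟩)
    (hcen : ∀ m, ψ (c m) = 0) :
    IsAltCenteredProd ψ B (idx 0) (idx (Fin.last n)) (List.ofFn c).prod := by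
  induction n with
  | zero => simpa using IsAltCenteredProd.single (hc 0) (hcen 0)
  | succ n ih =>
    rw [List.ofFn_succ, List.prod_cons]
    exact .cons (hc 0) (hcen 0) (halt 0 (by simp))
      (ih _ _ (fun m => hc m.succ) (fun m hm => halt m.succ (by simpa using hm))
        fun m => hcen m.succ)

theorem areFree_iff : AreFree ψ B ↔ ∀ i j a, IsAltCenteredProd ψ B i j a → ψ a = 0 := by
  constructor
  · rintro hfree i j a h
    obtain ⟨n, c, idx, -, hc, halt, hcen, rfl⟩ := h.exists_ofFn
    exact hfree (n + 1) (by omega) c idx hc halt hcen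
  · rintro h (_ | n) hn c idx hc halt hcen
    · omega
    · exact h _ _ _ (isAltCenteredProd_ofFn c idx hc halt hcen)

theorem IsAltCenteredProd.mem {P : ι → ι → Set R} (hB : ∀ i a, a ∈ B i → ψ a = 0 → a ∈ P i i)
    (hP : ∀ i j k a w, i ≠ j → a ∈ P i i → w ∈ P j k → a * w ∈ P i k) {i j : ι} {a : R}
    (h : IsAltCenteredProd ψ B i j a) : a ∈ P i j := by
  induction h with
  | single ha h0 => exact hB _ _ ha h0
  | cons ha h0 hij _ ih => exact hP _ _ _ _ _ hij (hB _ _ ha h0) ih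

end AlternatingProducts

section AltSpan

variable {A : Type*} [Ring A] [Algebra ℂ A] (φ : A →ₗ[ℂ] ℂ) {ι : Type*} (B : ι → Set A)

def altSpan (S T : Set ι) : Submodule ℂ A :=
  span ℂ {a | ∃ i ∈ S, ∃ j ∈ T, IsAltCenteredProd φ B i j a}

variable {φ B}

theorem altSpan_mono {S S' T T' : Set ι} (hS : S ⊆ S') (hT : T ⊆ T') :
    altSpan φ B S T ≤ altSpan φ B S' T' :=
  span_mono fun _ ⟨i, hi, j, hj, h⟩ => ⟨i, hS hi, j, hT hj, h⟩

theorem mem_altSpan_of_mem {S T : Set ι} {i : ι} {a : A} (ha : a ∈ B i) (h0 : φ a = 0)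
    (hS : i ∈ S) (hT : i ∈ T) : a ∈ altSpan φ B S T :=
  subset_span ⟨i, hS, i, hT, .single ha h0⟩

theorem mul_mem_altSpan {S T S' T' : Set ι} (hTS : Disjoint T S') {a b : A}
    (ha : a ∈ altSpan φ B S T) (hb : b ∈ altSpan φ B S' T') : a * b ∈ altSpan φ B S T' := by
  have hab := mul_mem_mul ha hb
  rw [altSpan, altSpan, span_mul_span] at hab
  refine span_mono ?_ hab
  rintro _ ⟨x, ⟨i, hi, j, hj, hx⟩, y, ⟨k, hk, l, hl, hy⟩, rfl⟩
  exact ⟨i, hi, l, hl, hx.mul hy fun hjk => hTS.ne_of_mem hj hk hjk⟩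

theorem altSpan_le_ker (hfree : AreFree φ B) (S T : Set ι) : altSpan φ B S T ≤ LinearMap.ker φ :=
  span_le.2 fun _ ⟨i, _, j, _, h⟩ => areFree_iff.1 hfree i j _ h

end AltSpan

section AltMatrices

variable {A : Type*} [Ring A] [Algebra ℂ A] (φ : A →ₗ[ℂ] ℂ) {ι : Type*} (B : ι → Set A)
  {n : Type*}

def altMatrices (f g : n → Set ι) : Submodule ℂ (Matrix n n A) where
  carrier := {M | ∀ i j, M i j ∈ altSpan φ B (f i) (g j)}
  add_mem' hM hN i j := add_mem (hM i j) (hN i j)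
  zero_mem' _ _ := zero_mem _
  smul_mem' c _ hM i j := smul_mem _ c (hM i j)

variable {φ B}

theorem altMatrices_mono {f f' g g' : n → Set ι} (hf : ∀ i, f i ⊆ f' i) (hg : ∀ j, g j ⊆ g' j) :
    altMatrices φ B f g ≤ altMatrices φ B f' g' :=
  fun _ hM i j => altSpan_mono (hf i) (hg j) (hM i j)

theorem mul_mem_altMatrices [Fintype n] {f g f' g' : n → Set ι} (hgf : ∀ k, Disjoint (g k) (f' k))
    {M N : Matrix n n A} (hM : M ∈ altMatrices φ B f g) (hN : N ∈ altMatrices φ B f' g') :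
    M * N ∈ altMatrices φ B f g' := fun i j =>
  Matrix.mul_apply (M := M) ▸ sum_mem fun k _ => mul_mem_altSpan (hgf k) (hM i k) (hN k j)

theorem pow_succ_mem_altMatrices [Fintype n] [DecidableEq n] {f g : n → Set ι}
    (hgf : ∀ k, Disjoint (g k) (f k)) {M : Matrix n n A} (hM : M ∈ altMatrices φ B f g) (m : ℕ) :
    M ^ (m + 1) ∈ altMatrices φ B f g := by
  induction m with
  | zero => simpa using hM
  | succ m ih => rw [pow_succ]; exact mul_mem_altMatrices hgf ih hM

theorem altMatrices_le_ker [Fintype n] (hfree : AreFree φ B) (i₀ : n) (f g : n → Set ι) :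
    altMatrices φ B f g ≤ LinearMap.ker (φ ∘ₗ Matrix.entryLinearMap ℂ A i₀ i₀) :=
  fun _ hM => altSpan_le_ker hfree _ _ (hM i₀ i₀)

theorem diagonal_mem_altMatrices [DecidableEq n] {f g : n → Set ι} {d : n → A}
    (hd : ∀ k, d k ∈ altSpan φ B (f k) (g k)) : Matrix.diagonal d ∈ altMatrices φ B f g := by
  intro k l
  by_cases hkl : k = l
  · subst hkl; simpa using hd k
  · simp [hkl]

theorem AreFree.of_mem_altMatrices [Fintype n] [DecidableEq n] (hfree : AreFree φ B)
    {κ : Type*} (cls : ι → κ) (B' : κ → Set (Matrix n n A)) (i₀ : n)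
    (hB' : ∀ s M, M ∈ B' s → φ (M i₀ i₀) = 0 →
      M ∈ altMatrices φ B (fun _ => cls ⁻¹' {s}) (fun _ => cls ⁻¹' {s})) :
    AreFree (fun M => φ (M i₀ i₀)) B' := by
  refine areFree_iff.2 fun s t M hM => altSpan_le_ker hfree (cls ⁻¹' {s}) (cls ⁻¹' {t}) ?_
  have hMP : M ∈ altMatrices φ B (fun _ => cls ⁻¹' {s}) (fun _ => cls ⁻¹' {t}) :=
    hM.mem (P := fun s t => altMatrices φ B (fun _ : n => cls ⁻¹' {s}) (fun _ => cls ⁻¹' {t}))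
      hB' fun s t _ _ _ hst ha hw =>
        mul_mem_altMatrices (fun _ => (Set.disjoint_singleton.2 hst).preimage cls) ha hw
  exact hMP i₀ i₀

end AltMatrices

section CenteredAdjoin

theorem mem_of_mem_span_of_sub_smul_mem {K M : Type*} [Field K] [AddCommGroup M] [Module K M]
    {Φ : M →ₗ[K] K} (e : M) {S : Set M} {W : Submodule K M} (hS : ∀ s ∈ S, s - Φ s • e ∈ W)
    {x : M} (hx : x ∈ span K S) (h0 : Φ x = 0) : x ∈ W := by
  let L : M →ₗ[K] M := LinearMap.id - Φ.smulRight e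
  have hLx : L x = x := by simp [L, h0]
  have hL : (span K S).map L ≤ W := by
    rw [map_span, span_le]
    rintro _ ⟨s, hs, rfl⟩
    exact hS s hs
  exact hLx ▸ hL (mem_map_of_mem hx)

theorem exists_eq_pow_or_eq_star_pow_of_mem_closure {R : Type*} [Monoid R] [StarMul R] {u : R}
    (hu : u ∈ unitary R) {y : R} (hy : y ∈ Submonoid.closure ({u} ∪ star {u})) :
    ∃ m : ℕ, y = u ^ m ∨ y = star u ^ m := by
  let U : unitary R := ⟨u, hu⟩
  have hle : Submonoid.closure ({u} ∪ star {u}) ≤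
      (Subgroup.zpowers U).toSubmonoid.map (unitary R).subtype := by
    rw [Submonoid.closure_le, Set.star_singleton, Set.singleton_union, Set.insert_subset_iff,
      Set.singleton_subset_iff]
    exact ⟨⟨U, Subgroup.mem_zpowers U, rfl⟩,
      ⟨U⁻¹, (Subgroup.zpowers U).inv_mem (Subgroup.mem_zpowers U), rfl⟩⟩
  obtain ⟨_, ⟨z, rfl⟩, rfl⟩ := hle hy
  obtain ⟨m, rfl | rfl⟩ := z.eq_nat_or_neg
  · exact ⟨m, Or.inl (by simp [U])⟩
  · exact ⟨m, Or.inr (by simp [U, ← Unitary.star_eq_inv, star_pow])⟩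

variable {R : Type*} [Ring R] [StarRing R] [Algebra ℂ R] [StarModule ℂ R] {Φ : R →ₗ[ℂ] ℂ}
  {W : Submodule ℂ R}

theorem mem_of_mem_adjoin_of_mem_unitary (hΦ : Φ 1 = 1) (hW : W ≤ LinearMap.ker Φ) {u : R}
    (hu : u ∈ unitary R) (hpow : ∀ m, u ^ (m + 1) ∈ W) (hpow' : ∀ m, star u ^ (m + 1) ∈ W)
    {x : R} (hx : x ∈ StarAlgebra.adjoin ℂ {u}) (h0 : Φ x = 0) : x ∈ W := by
  have hxspan : x ∈ span ℂ (Submonoid.closure ({u} ∪ star {u}) : Set R) := by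
    rw [← StarAlgebra.adjoin_eq_span]; exact hx
  refine mem_of_mem_span_of_sub_smul_mem 1 (fun s hs => ?_) hxspan h0
  have hcen : ∀ y ∈ W, y - Φ y • 1 ∈ W := fun y hy => by simpa [LinearMap.mem_ker.1 (hW hy)]
  obtain ⟨_ | m, rfl | rfl⟩ := exists_eq_pow_or_eq_star_pow_of_mem_closure hu hs
  · simp [hΦ]
  · simp [hΦ]
  · exact hcen _ (hpow m)
  · exact hcen _ (hpow' m)

theorem mem_of_mem_adjoin_of_isSelfAdjoint {u : R} (hu : IsSelfAdjoint u)
    (hpow : ∀ m, u ^ m - Φ (u ^ m) • 1 ∈ W) {x : R} (hx : x ∈ StarAlgebra.adjoin ℂ {u})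
    (h0 : Φ x = 0) : x ∈ W := by
  have hxspan : x ∈ span ℂ (Submonoid.closure {u} : Set R) := by
    have h := StarAlgebra.adjoin_eq_span (R := ℂ) {u}
    rw [Set.star_singleton, hu.star_eq, Set.union_self] at h
    exact h ▸ hx
  refine mem_of_mem_span_of_sub_smul_mem 1 (fun s hs => ?_) hxspan h0
  obtain ⟨m, rfl⟩ := Submonoid.mem_closure_singleton.1 hs
  exact hpow m

end CenteredAdjoin

section TwoByTwo

open Matrix

variable {A : Type*} [Ring A]

theorem Matrix.single_zero_one_add_single_one_zero (a b : A) :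
    single (0 : Fin 2) (1 : Fin 2) a + single 1 0 b = !![0, a; b, 0] := by
  ext i j; fin_cases i <;> fin_cases j <;> simp

theorem Matrix.single_one_one_add_single_zero_zero (a b : A) :
    single (1 : Fin 2) (1 : Fin 2) a + single 0 0 b = diagonal ![b, a] := by
  ext i j; fin_cases i <;> fin_cases j <;> simp

theorem Matrix.star_antidiag_fin_two [StarRing A] (a b : A) :
    star !![0, a; b, 0] = !![0, star b; star a, 0] := by
  ext i j; fin_cases i <;> fin_cases j <;> simp [star_apply]

theorem Matrix.antidiag_fin_two_mem_unitary [StarRing A] {a b : A} (ha : a ∈ unitary A)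
    (hb : b ∈ unitary A) : !![0, a; b, 0] ∈ unitary (Matrix (Fin 2) (Fin 2) A) := by
  rw [Unitary.mem_iff, star_antidiag_fin_two, mul_fin_two, mul_fin_two, one_fin_two]
  simp [Unitary.star_mul_self_of_mem ha, Unitary.star_mul_self_of_mem hb,
    Unitary.mul_star_self_of_mem ha, Unitary.mul_star_self_of_mem hb]

theorem Matrix.star_diagonal_mul_diagonal [StarRing A] {n : Type*} [Fintype n] [DecidableEq n]
    (d : n → A) :
    star (diagonal d) * diagonal d = diagonal fun k => star (d k) * d k := by
  rw [star_eq_conjTranspose, diagonal_conjTranspose, diagonal_mul_diagonal]; rfl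

variable [Algebra ℂ A] {φ : A →ₗ[ℂ] ℂ} {ι : Type*}

-- The first letter of an entry is determined by its row and the last one by its column; tracking
-- both ends is what keeps all powers alternating.
theorem antidiag_mem_altMatrices {B : ι → Set A} {i j : ι} {a b : A} (ha : a ∈ B i)
    (hb : b ∈ B j) (ha0 : φ a = 0) (hb0 : φ b = 0) :
    !![0, a; b, 0] ∈ altMatrices φ B ![{i}, {j}] ![{j}, {i}] := by
  intro k l
  fin_cases k <;> fin_cases l <;> simp [mem_altSpan_of_mem ha ha0, mem_altSpan_of_mem hb hb0]

theorem antidiag_pow_succ_mem_altMatrices {B : ι → Set A} {i j : ι} (hij : i ≠ j) {a b : A}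
    (ha : a ∈ B i) (hb : b ∈ B j) (ha0 : φ a = 0) (hb0 : φ b = 0) {S : Set ι} (hi : i ∈ S)
    (hj : j ∈ S) (m : ℕ) :
    !![0, a; b, 0] ^ (m + 1) ∈ altMatrices φ B (fun _ => S) (fun _ => S) := by
  refine altMatrices_mono (f := ![{i}, {j}]) (g := ![{j}, {i}]) ?_ ?_
    (pow_succ_mem_altMatrices ?_ (antidiag_mem_altMatrices ha hb ha0 hb0) m) <;>
  intro k <;> fin_cases k <;> simp [hi, hj, hij, hij.symm]

theorem antidiag_pow_succ_apply_one_one {B : ι → Set A} (hfree : AreFree φ B) {i j : ι}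
    (hij : i ≠ j) {a b : A} (ha : a ∈ B i) (hb : b ∈ B j) (ha0 : φ a = 0) (hb0 : φ b = 0)
    (m : ℕ) : φ ((!![0, a; b, 0] ^ (m + 1)) 1 1) = 0 :=
  altSpan_le_ker hfree _ _ <|
    antidiag_pow_succ_mem_altMatrices hij ha hb ha0 hb0 (Set.mem_univ i) (Set.mem_univ j) m 1 1

end TwoByTwo

section Blocks

open Matrix

variable {A : Type*} [Ring A] [StarRing A] [Algebra ℂ A] [StarModule ℂ A] {φ : A →ₗ[ℂ] ℂ}
  {ι : Type*} {B : ι → StarSubalgebra ℂ A}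

theorem mem_altMatrices_of_mem_adjoin_antidiag (hφ1 : φ 1 = 1) (hfree : AreFree φ (B ·))
    {i j : ι} (hij : i ≠ j) {S : Set ι} (hi : i ∈ S) (hj : j ∈ S) {a b : A}
    (ha : a ∈ unitary A) (hb : b ∈ unitary A) (haB : a ∈ B i) (hbB : b ∈ B j)
    (ha0 : φ a = 0) (hb0 : φ b = 0) (ha0' : φ (star a) = 0) (hb0' : φ (star b) = 0)
    {x : Matrix (Fin 2) (Fin 2) A} (hx : x ∈ StarAlgebra.adjoin ℂ {!![0, a; b, 0]})
    (h0 : φ (x 1 1) = 0) : x ∈ altMatrices φ (B ·) (fun _ => S) (fun _ => S) := by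
  have hpow' (m : ℕ) : star !![0, a; b, 0] ^ (m + 1) ∈
      altMatrices φ (B ·) (fun _ => S) (fun _ => S) := by
    rw [star_antidiag_fin_two]
    have hb' : star b ∈ (B j : Set A) := star_mem hbB
    have ha' : star a ∈ (B i : Set A) := star_mem haB
    exact antidiag_pow_succ_mem_altMatrices hij.symm hb' ha' hb0' ha0' hj hi m
  have hΦ : (φ ∘ₗ entryLinearMap ℂ A (1 : Fin 2) (1 : Fin 2)) 1 = 1 := by simpa using hφ1
  have hker := altMatrices_le_ker hfree (1 : Fin 2) (fun _ => S) (fun _ => S)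
  have hpow := antidiag_pow_succ_mem_altMatrices (B := (B ·)) hij haB hbB ha0 hb0 hi hj
  exact mem_of_mem_adjoin_of_mem_unitary hΦ hker (antidiag_fin_two_mem_unitary ha hb) hpow hpow'
    hx h0

theorem mem_altMatrices_of_mem_adjoin_diagonal {n : Type*} [Fintype n] [DecidableEq n]
    (hφ1 : φ 1 = 1) {d : n → A} (hd : IsSelfAdjoint d) {idx : n → ι} (hdB : ∀ k, d k ∈ B (idx k))
    {S : Set ι} (hS : ∀ k, idx k ∈ S) (μ : ℕ → ℂ) (hμ : ∀ k m, φ (d k ^ m) = μ m) {i₀ : n}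
    {x : Matrix n n A} (hx : x ∈ StarAlgebra.adjoin ℂ {diagonal d}) (h0 : φ (x i₀ i₀) = 0) :
    x ∈ altMatrices φ (B ·) (fun _ => S) (fun _ => S) := by
  refine mem_of_mem_adjoin_of_isSelfAdjoint (Φ := φ ∘ₗ entryLinearMap ℂ A i₀ i₀)
    (isHermitian_diagonal_of_self_adjoint d hd) (fun m => ?_) hx h0
  have hpow : diagonal d ^ m - φ ((diagonal d ^ m) i₀ i₀) • 1 =
      diagonal fun k => d k ^ m - μ m • 1 := by
    ext k l
    by_cases hkl : k = l <;> simp [diagonal_pow, hkl, hμ]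
  rw [LinearMap.comp_apply, entryLinearMap_apply, hpow]
  exact diagonal_mem_altMatrices fun k => mem_altSpan_of_mem
    (sub_mem (pow_mem (hdB k) m) (Subalgebra.smul_mem _ (one_mem _) _)) (by simp [hμ, hφ1])
    (hS k) (hS k)

end Blocks

theorem haarUnitary_quarterCircular_polar_decomposition_general
    (A : Type*) [NormedRing A] [StarRing A] [NormedAlgebra ℂ A] [StarModule ℂ A]
    (φ : A →ₗ[ℂ] ℂ) (hφ1 : φ 1 = 1)
    (u₁ u₂ w₁ w₂ : A)
    (hu₁ : star u₁ * u₁ = 1 ∧ u₁ * star u₁ = 1)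
    (hu₂ : star u₂ * u₂ = 1 ∧ u₂ * star u₂ = 1)
    (hu₁haar : ∀ k : ℕ, 1 ≤ k → φ (u₁ ^ k) = 0 ∧ φ ((star u₁) ^ k) = 0)
    (hu₂haar : ∀ k : ℕ, 1 ≤ k → φ (u₂ ^ k) = 0 ∧ φ ((star u₂) ^ k) = 0)
    (hw₁pos : ∃ y : A, w₁ = star y * y) (hw₂pos : ∃ y : A, w₂ = star y * y)
    (hw₁qc : ∀ k : ℕ, φ (w₁ ^ k) = (qcMoment k : ℂ))
    (hw₂qc : ∀ k : ℕ, φ (w₂ ^ k) = (qcMoment k : ℂ))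
    (hfree : AreFree (fun a => φ a)
      (fun i : Fin 4 =>
        ((StarAlgebra.adjoin ℂ {(![u₁, u₂, w₁, w₂]) i} : StarSubalgebra ℂ A) : Set A))) :
    -- θ and χ
    (star (Matrix.single (0 : Fin 2) (1 : Fin 2) u₁ + Matrix.single (1 : Fin 2) (0 : Fin 2) u₂)
        * (Matrix.single (0 : Fin 2) (1 : Fin 2) u₁ + Matrix.single (1 : Fin 2) (0 : Fin 2) u₂) = 1 ∧
      (Matrix.single (0 : Fin 2) (1 : Fin 2) u₁ + Matrix.single (1 : Fin 2) (0 : Fin 2) u₂)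
        * star (Matrix.single (0 : Fin 2) (1 : Fin 2) u₁ + Matrix.single (1 : Fin 2) (0 : Fin 2) u₂) = 1) ∧
    (∀ k : ℕ, 1 ≤ k →
      φ ((((Matrix.single (0 : Fin 2) (1 : Fin 2) u₁ + Matrix.single (1 : Fin 2) (0 : Fin 2) u₂)) ^ k) 1 1)
        = 0 ∧
      φ (((star (Matrix.single (0 : Fin 2) (1 : Fin 2) u₁ + Matrix.single (1 : Fin 2) (0 : Fin 2) u₂)) ^ k) 1 1)
        = 0) ∧
    ((∃ Y : Matrix (Fin 2) (Fin 2) A,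
        Matrix.single (1 : Fin 2) (1 : Fin 2) w₁ + Matrix.single (0 : Fin 2) (0 : Fin 2) w₂ = star Y * Y) ∧
      (∀ k : ℕ,
        φ (((Matrix.single (1 : Fin 2) (1 : Fin 2) w₁ + Matrix.single (0 : Fin 2) (0 : Fin 2) w₂) ^ k) 1 1)
          = (qcMoment k : ℂ))) ∧
    AreFree (fun x : Matrix (Fin 2) (Fin 2) A => φ (x 1 1))
      (fun i : Fin 2 =>
        ((StarAlgebra.adjoin ℂ
          {(![Matrix.single (0 : Fin 2) (1 : Fin 2) u₁ + Matrix.single (1 : Fin 2) (0 : Fin 2) u₂,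
              Matrix.single (1 : Fin 2) (1 : Fin 2) w₁ + Matrix.single (0 : Fin 2) (0 : Fin 2) w₂]) i} :
          StarSubalgebra ℂ (Matrix (Fin 2) (Fin 2) A)) : Set (Matrix (Fin 2) (Fin 2) A))) := by
  rw [Matrix.single_zero_one_add_single_one_zero, Matrix.single_one_one_add_single_zero_zero]
  have hu₁U : u₁ ∈ unitary A := Unitary.mem_iff.2 hu₁
  have hu₂U : u₂ ∈ unitary A := Unitary.mem_iff.2 hu₂
  obtain ⟨hu₁0, hu₁0'⟩ := hu₁haar 1 le_rfl
  obtain ⟨hu₂0, hu₂0'⟩ := hu₂haar 1 le_rfl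
  rw [pow_one] at hu₁0 hu₁0' hu₂0 hu₂0'
  have hmem (i : Fin 4) : ![u₁, u₂, w₁, w₂] i ∈ StarAlgebra.adjoin ℂ {![u₁, u₂, w₁, w₂] i} :=
    StarAlgebra.self_mem_adjoin_singleton ℂ _
  obtain ⟨y₁, rfl⟩ := hw₁pos
  obtain ⟨y₂, rfl⟩ := hw₂pos
  refine ⟨Unitary.mem_iff.1 (Matrix.antidiag_fin_two_mem_unitary hu₁U hu₂U), fun k hk => ?_,
    ⟨⟨Matrix.diagonal ![y₂, y₁], ?_⟩, fun k => by simp [Matrix.diagonal_pow, hw₁qc]⟩, ?_⟩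
  · obtain ⟨m, rfl⟩ := Nat.exists_eq_add_of_le' hk
    rw [Matrix.star_antidiag_fin_two]
    exact ⟨antidiag_pow_succ_apply_one_one hfree (i := 0) (j := 1) (by decide) (hmem 0) (hmem 1)
      hu₁0 hu₂0 m, antidiag_pow_succ_apply_one_one hfree (i := 1) (j := 0) (by decide)
      (star_mem (hmem 1)) (star_mem (hmem 0)) hu₂0' hu₁0' m⟩
  · rw [Matrix.star_diagonal_mul_diagonal]
    congr 1; ext k; fin_cases k <;> rfl
  · refine AreFree.of_mem_altMatrices hfree ![0, 0, 1, 1] _ 1 fun s M hM h0 => ?_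
    fin_cases s
    · refine mem_altMatrices_of_mem_adjoin_antidiag hφ1 hfree (i := 0) (j := 1) (by decide) ?_ ?_
        hu₁U hu₂U (hmem 0) (hmem 1) hu₁0 hu₂0 hu₁0' hu₂0' hM h0 <;> rfl
    · refine mem_altMatrices_of_mem_adjoin_diagonal hφ1 ?_ (idx := ![3, 2]) (fun k => ?_)
        (fun k => by fin_cases k <;> rfl) (fun m => qcMoment m) (fun k m => ?_) hM h0
      · exact Pi.isSelfAdjoint.2 fun k => by fin_cases k <;> exact .star_mul_self _
      · fin_cases k; exacts [hmem 3, hmem 2]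
      · fin_cases k; exacts [hw₂qc m, hw₁qc m]

/-- for free Haar unitaries `u₁, u₂` and free positive quarter-circular
`w₁, w₂`, the matrices `θ = u₁⊗e(1,2) + u₂⊗e(2,1)` and `χ = w₁⊗e(2,2) + w₂⊗e(1,1)` satisfy:
(1) `θ` is unitary; (2) `θ` is a Haar unitary w.r.t. `Φ₂`; (3) `χ` is positive
quarter-circular w.r.t. `Φ₂`; (4) `θ` and `χ` are *-free w.r.t. `Φ₂`. -/
theorem haarUnitary_quarterCircular_polar_decomposition
    (A : Type*) [NormedRing A] [StarRing A] [CStarRing A] [NormedAlgebra ℂ A]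
    [CompleteSpace A] [StarModule ℂ A]
    (φ : A →ₗ[ℂ] ℂ) (hφ1 : φ 1 = 1) (hφpos : ∀ a : A, 0 ≤ φ (star a * a))
    (u₁ u₂ w₁ w₂ : A)
    (hu₁ : star u₁ * u₁ = 1 ∧ u₁ * star u₁ = 1)
    (hu₂ : star u₂ * u₂ = 1 ∧ u₂ * star u₂ = 1)
    (hu₁haar : ∀ k : ℕ, 1 ≤ k → φ (u₁ ^ k) = 0 ∧ φ ((star u₁) ^ k) = 0)
    (hu₂haar : ∀ k : ℕ, 1 ≤ k → φ (u₂ ^ k) = 0 ∧ φ ((star u₂) ^ k) = 0)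
    (hw₁pos : ∃ y : A, w₁ = star y * y) (hw₂pos : ∃ y : A, w₂ = star y * y)
    (hw₁qc : ∀ k : ℕ, φ (w₁ ^ k) = (qcMoment k : ℂ))
    (hw₂qc : ∀ k : ℕ, φ (w₂ ^ k) = (qcMoment k : ℂ))
    (hfree : AreFree (fun a => φ a)
      (fun i : Fin 4 =>
        ((StarAlgebra.adjoin ℂ {(![u₁, u₂, w₁, w₂]) i} : StarSubalgebra ℂ A) : Set A))) :
    -- θ and χ
    (star (Matrix.single (0 : Fin 2) (1 : Fin 2) u₁ + Matrix.single (1 : Fin 2) (0 : Fin 2) u₂)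
        * (Matrix.single (0 : Fin 2) (1 : Fin 2) u₁ + Matrix.single (1 : Fin 2) (0 : Fin 2) u₂) = 1 ∧
      (Matrix.single (0 : Fin 2) (1 : Fin 2) u₁ + Matrix.single (1 : Fin 2) (0 : Fin 2) u₂)
        * star (Matrix.single (0 : Fin 2) (1 : Fin 2) u₁ + Matrix.single (1 : Fin 2) (0 : Fin 2) u₂) = 1) ∧
    (∀ k : ℕ, 1 ≤ k →
      φ ((((Matrix.single (0 : Fin 2) (1 : Fin 2) u₁ + Matrix.single (1 : Fin 2) (0 : Fin 2) u₂)) ^ k) 1 1)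
        = 0 ∧
      φ (((star (Matrix.single (0 : Fin 2) (1 : Fin 2) u₁ + Matrix.single (1 : Fin 2) (0 : Fin 2) u₂)) ^ k) 1 1)
        = 0) ∧
    ((∃ Y : Matrix (Fin 2) (Fin 2) A,
        Matrix.single (1 : Fin 2) (1 : Fin 2) w₁ + Matrix.single (0 : Fin 2) (0 : Fin 2) w₂ = star Y * Y) ∧
      (∀ k : ℕ,
        φ (((Matrix.single (1 : Fin 2) (1 : Fin 2) w₁ + Matrix.single (0 : Fin 2) (0 : Fin 2) w₂) ^ k) 1 1)
          = (qcMoment k : ℂ))) ∧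
    AreFree (fun x : Matrix (Fin 2) (Fin 2) A => φ (x 1 1))
      (fun i : Fin 2 =>
        ((StarAlgebra.adjoin ℂ
          {(![Matrix.single (0 : Fin 2) (1 : Fin 2) u₁ + Matrix.single (1 : Fin 2) (0 : Fin 2) u₂,
              Matrix.single (1 : Fin 2) (1 : Fin 2) w₁ + Matrix.single (0 : Fin 2) (0 : Fin 2) w₂]) i} :
          StarSubalgebra ℂ (Matrix (Fin 2) (Fin 2) A)) : Set (Matrix (Fin 2) (Fin 2) A))) :=
  haarUnitary_quarterCircular_polar_decomposition_general A φ hφ1 u₁ u₂ w₁ w₂ hu₁ hu₂ hu₁haar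
    hu₂haar hw₁pos hw₂pos hw₁qc hw₂qc hfree
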